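/- arXiv:2407.06390 — 2 statements merged into one kernel-verified Lean document; each statement's English description precedes it below -/
import Mathlib

section
/- Let Π be a finite index set of size d, let a, b : Π → ℝ, and define the empirical CDFs F̂(x) = (1/d)·#{π ∈ Π : a_π < x} and F̃(x) = (1/d)·#{π ∈ Π : b_π < x}. Let F : ℝ → ℝ be Lipschitz with constant D ≥ 0, let δ₁ ≥ 0 and δ₂ > 0, and assume sup_{x ∈ ℝ} |F̃(x) − F(x)| ≤ δ₁ and (1/d)·Σ_{π ∈ Π} (a_π − b_π)² ≤ δ₂². Then sup_{x ∈ ℝ} |F̂(x) − F̃(x)| ≤ 2δ₁ + δ₂ + 2D·√δ₂. -/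
open Finset

/-!
Call an index *bad* when `√δ₂ ≤ |a π - b π|`. By Markov's inequality applied to the squared
discrepancies there are at most `d δ₂` bad indices, and off them `a` and `b` differ by less
than `√δ₂`. Hence `F̂(x) ≤ F̃(x + √δ₂) + δ₂` and `F̃(x - √δ₂) ≤ F̂(x) + δ₂`. Finally `F̃`, being
uniformly `δ₁`-close to a `D`-Lipschitz function, moves by at most `2δ₁ + D√δ₂` over a step of
length `√δ₂`.
-/

theorem card_filter_le_nsmul_le_sum {ι M : Type*} [AddCommMonoid M] [PartialOrder M]
    [IsOrderedAddMonoid M] (s : Finset ι) {f : ι → M} (hf : ∀ i ∈ s, 0 ≤ f i) (t : M)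
    [DecidablePred fun i => t ≤ f i] :
    #{i ∈ s | t ≤ f i} • t ≤ ∑ i ∈ s, f i :=
  calc #{i ∈ s | t ≤ f i} • t ≤ ∑ i ∈ s with t ≤ f i, f i :=
        card_nsmul_le_sum _ _ _ fun _ hi => (mem_filter.1 hi).2
    _ ≤ ∑ i ∈ s, f i := sum_le_sum_of_subset_of_nonneg (filter_subset _ _) fun i hi _ => hf i hi

theorem card_filter_lt_le_card_filter_lt_add {ι : Type*} (s : Finset ι) (a b : ι → ℝ)
    (x ε : ℝ) :
    #{i ∈ s | a i < x} ≤ #{i ∈ s | b i < x + ε} + #{i ∈ s | ε ≤ |a i - b i|} := by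
  classical
  refine (card_le_card fun i hi => ?_).trans (card_union_le _ _)
  simp only [mem_union, mem_filter] at hi ⊢
  by_cases hbad : ε ≤ |a i - b i|
  · exact Or.inr ⟨hi.1, hbad⟩
  · exact Or.inl ⟨hi.1, by linarith [(abs_lt.1 (not_le.1 hbad)).1]⟩

noncomputable def empiricalCDF {ι : Type*} [Fintype ι] (d : ℕ) (a : ι → ℝ) (x : ℝ) : ℝ :=
  #{π | a π < x} / d

theorem empiricalCDF_le_empiricalCDF_add_sqrt {ι : Type*} [Fintype ι] {d : ℕ} (hd : 0 < d)
    (a b : ι → ℝ) {δ : ℝ} (hδ : 0 < δ) (hab : (∑ π, (a π - b π) ^ 2) / d ≤ δ ^ 2) (x : ℝ) :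
    empiricalCDF d a x ≤ empiricalCDF d b (x + √δ) + δ := by
  have hdR : (0 : ℝ) < d := Nat.cast_pos.2 hd
  have hbad : (#{π | √δ ≤ |a π - b π|} : ℝ) ≤ d * δ := by
    have hmarkov := card_filter_le_nsmul_le_sum univ (fun π _ => sq_nonneg (a π - b π)) δ
    have hfilter : univ.filter (fun π => δ ≤ (a π - b π) ^ 2) =
        univ.filter fun π => √δ ≤ |a π - b π| :=
      filter_congr fun π _ => by rw [Real.sqrt_le_iff, sq_abs, and_iff_right (abs_nonneg _)]
    rw [hfilter, nsmul_eq_mul] at hmarkov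
    rw [div_le_iff₀ hdR] at hab
    exact le_of_mul_le_mul_right (hmarkov.trans (by linarith)) hδ
  have hcount : (#{π | a π < x} : ℝ) ≤ #{π | b π < x + √δ} + #{π | √δ ≤ |a π - b π|} := by
    exact_mod_cast card_filter_lt_le_card_filter_lt_add univ a b x √δ
  unfold empiricalCDF
  rw [div_add' _ _ _ hdR.ne', div_le_div_iff_of_pos_right hdR]
  linarith

theorem abs_sub_le_of_forall_abs_sub_le_lipschitz {F G : ℝ → ℝ} {D δ : ℝ}
    (hF : ∀ x y, |F x - F y| ≤ D * |x - y|) (hG : ∀ x, |G x - F x| ≤ δ) (x y : ℝ) :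
    |G x - G y| ≤ 2 * δ + D * |x - y| :=
  calc |G x - G y| = |(G x - F x) + (F x - F y) + (F y - G y)| := by ring_nf
    _ ≤ |G x - F x| + |F x - F y| + |F y - G y| := abs_add_three _ _ _
    _ ≤ δ + D * |x - y| + δ := by
        gcongr
        · exact hG x
        · exact hF x y
        · rw [abs_sub_comm]; exact hG y
    _ = 2 * δ + D * |x - y| := by ring

theorem empirical_cdf_uniform_bound_general
    {ι : Type*} [Fintype ι] (d : ℕ)
    (a b : ι → ℝ)
    (Fhat Ftil : ℝ → ℝ)
    (hFhat : ∀ x, Fhat x = ((Finset.univ.filter fun π : ι => a π < x).card : ℝ) / d)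
    (hFtil : ∀ x, Ftil x = ((Finset.univ.filter fun π : ι => b π < x).card : ℝ) / d)
    (F : ℝ → ℝ) (D : ℝ) (hD : 0 ≤ D)
    (hF : ∀ x y : ℝ, |F x - F y| ≤ D * |x - y|)
    (δ₁ δ₂ : ℝ) (hδ₁ : 0 ≤ δ₁) (hδ₂ : 0 < δ₂)
    (h1 : ∀ x : ℝ, |Ftil x - F x| ≤ δ₁)
    (h2 : (∑ π : ι, (a π - b π) ^ 2) / d ≤ δ₂ ^ 2) :
    ∀ x : ℝ, |Fhat x - Ftil x| ≤ 2 * δ₁ + δ₂ + 2 * D * Real.sqrt δ₂ := by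
  intro x
  obtain rfl | hd := Nat.eq_zero_or_pos d
  · simp only [hFhat, hFtil, Nat.cast_zero, div_zero, sub_zero, abs_zero]
    positivity
  obtain rfl : Fhat = empiricalCDF d a := funext hFhat
  obtain rfl : Ftil = empiricalCDF d b := funext hFtil
  have h2' : (∑ π, (b π - a π) ^ 2) / d ≤ δ₂ ^ 2 := by simpa only [sub_sq_comm] using h2
  have hup := empiricalCDF_le_empiricalCDF_add_sqrt hd a b hδ₂ h2 x
  have hdown := empiricalCDF_le_empiricalCDF_add_sqrt hd b a hδ₂ h2' (x - √δ₂)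
  rw [sub_add_cancel] at hdown
  have hnear := abs_sub_le_of_forall_abs_sub_le_lipschitz hF h1
  have hright : |empiricalCDF d b (x + √δ₂) - empiricalCDF d b x| ≤ 2 * δ₁ + D * √δ₂ := by
    simpa only [add_sub_cancel_left, abs_of_nonneg (Real.sqrt_nonneg δ₂)] using hnear (x + √δ₂) x
  have hleft : |empiricalCDF d b x - empiricalCDF d b (x - √δ₂)| ≤ 2 * δ₁ + D * √δ₂ := by
    simpa only [sub_sub_cancel, abs_of_nonneg (Real.sqrt_nonneg δ₂)] using hnear x (x - √δ₂)
  have hDε : 0 ≤ D * √δ₂ := by positivity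
  rw [abs_le] at hright hleft ⊢
  constructor <;> linarith

/-- Inequality (13) from Step 1 of the proof of Theorem 1: if the empirical CDF `F̃`
of the oracle scores `b` is uniformly within `δ₁` of a `D`-Lipschitz `F`, and the mean
squared discrepancy between the approximate scores `a` and the oracle scores `b` is
at most `δ₂²`, then the empirical CDF `F̂` of the approximate scores is uniformly
within `2δ₁ + δ₂ + 2D√δ₂` of `F̃`. -/
theorem empirical_cdf_uniform_bound
    {ι : Type*} [Fintype ι] (d : ℕ) (hd : Fintype.card ι = d)
    (a b : ι → ℝ)
    (Fhat Ftil : ℝ → ℝ)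
    (hFhat : ∀ x, Fhat x = ((Finset.univ.filter fun π : ι => a π < x).card : ℝ) / d)
    (hFtil : ∀ x, Ftil x = ((Finset.univ.filter fun π : ι => b π < x).card : ℝ) / d)
    (F : ℝ → ℝ) (D : ℝ) (hD : 0 ≤ D)
    (hF : ∀ x y : ℝ, |F x - F y| ≤ D * |x - y|)
    (δ₁ δ₂ : ℝ) (hδ₁ : 0 ≤ δ₁) (hδ₂ : 0 < δ₂)
    (h1 : ∀ x : ℝ, |Ftil x - F x| ≤ δ₁)
    (h2 : (∑ π : ι, (a π - b π) ^ 2) / d ≤ δ₂ ^ 2) :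
    ∀ x : ℝ, |Fhat x - Ftil x| ≤ 2 * δ₁ + δ₂ + 2 * D * Real.sqrt δ₂ :=
  empirical_cdf_uniform_bound_general d a b Fhat Ftil hFhat hFtil F D hD hF δ₁ δ₂ hδ₁ hδ₂ h1 h2
end

section
/- Let T, H, n ≥ 1 and 1 ≤ K ≤ H be integers and ε ∈ (0, 1) with ⌊ε(n + 1)⌋ ≥ 1. Let (X_1, Y_1), …, (X_{n+1}, Y_{n+1}) be random elements of ℝ^T × ℝ^H whose joint distribution is exchangeable (invariant under every permutation of the n + 1 indices). Let f : ℝ^T → ℝ^H be a measurable point predictor and σ_1, …, σ_H : ℝ^T → (0, ∞) measurable scaling functions. For each i define the non-conformity score α_i = K-max of the family (|Y_{i,1} − f(X_i)_1|/σ_1(X_i), …, |Y_{i,H} − f(X_i)_H|/σ_H(X_i)), where K-max denotes the K-th largest value counting multiplicity, and let q be the ⌊ε(n + 1)⌋-th largest value (counting multiplicity) among α_1, …, α_n. Then the JANET joint prediction region C(X_{n+1}) = (f(X_{n+1})_1 ± q·σ_1(X_{n+1})) × ⋯ × (f(X_{n+1})_H ± q·σ_H(X_{n+1})) controls the K-familywise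 error at level ε: P(#{j ∈ {1, …, H} : |Y_{n+1,j} − f(X_{n+1})_j| > q·σ_j(X_{n+1})} ≥ K) ≤ ε. -/
/-!
Write `m = ⌊ε(n+1)⌋₊` and say that an index ranks among the top `m` if at most `m` of the
`n + 1` scores (itself included) are at least its own. For every realisation at most `m`
indices do, and by exchangeability each index does with the same probability, so the test
index does with probability at most `m / (n + 1) ≤ ε`. If `K` coordinates of the test series
are missed, its `K`-max score exceeds `q`; since `q` is the `m`-th largest calibration score,
fewer than `m` calibration scores are at least the test score, so the test index ranks among
the top `m`.
-/

open MeasureTheory Finset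
open scoped ENNReal

/-- The `k`-th largest value (counting multiplicity) of a finite family of reals,
with default value `0` when `k` is out of range. -/
noncomputable def kthLargest {ι : Type*} [Fintype ι] (f : ι → ℝ) (k : ℕ) : ℝ :=
  ((Finset.univ.val.map f).sort (· ≤ ·)).getD (Fintype.card ι - k) 0

namespace List

variable {α : Type*} [LinearOrder α] {l : List α} {c : α}

theorem SortedLE.length_sub_le_countP_of_le_getElem (hl : l.SortedLE) {i : ℕ}
    (hi : i < l.length) (h : c ≤ l[i]) : l.length - i ≤ l.countP (c ≤ ·) := by
  have hdrop : (l.drop i).countP (c ≤ ·) = (l.drop i).length := by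
    refine countP_eq_length.mpr fun x hx => ?_
    obtain ⟨j, hj, rfl⟩ := mem_iff_getElem.mp hx
    simpa using h.trans (hl.getElem_le_getElem_of_le (Nat.le_add_right i j))
  calc l.length - i = (l.drop i).countP (c ≤ ·) := by rw [hdrop, length_drop]
    _ ≤ l.countP (c ≤ ·) := (drop_sublist i l).countP_le

theorem SortedLE.countP_le_of_getElem_lt (hl : l.SortedLE) {i : ℕ}
    (hi : i < l.length) (h : l[i] < c) : l.countP (c ≤ ·) ≤ l.length - (i + 1) := by
  have htake : (l.take (i + 1)).countP (c ≤ ·) = 0 := by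
    refine countP_eq_zero.mpr fun x hx => ?_
    obtain ⟨j, hj, rfl⟩ := mem_iff_getElem.mp hx
    simp only [length_take] at hj
    simpa using (hl.getElem_le_getElem_of_le (by omega : j ≤ i)).trans_lt h
  calc l.countP (c ≤ ·) = (l.drop (i + 1)).countP (c ≤ ·) := by
        rw [← take_append_drop (i + 1) l, countP_append, htake, zero_add, take_append_drop]
    _ ≤ l.length - (i + 1) := by simpa using countP_le_length (l := l.drop (i + 1))

theorem SortedLE.le_getElem_length_sub_iff (hl : l.SortedLE) {k : ℕ} (hk : 1 ≤ k)
    (hkl : k ≤ l.length) : c ≤ l[l.length - k] ↔ k ≤ l.countP (c ≤ ·) := by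
  refine ⟨fun h => ?_, fun h => ?_⟩
  · have := hl.length_sub_le_countP_of_le_getElem (by omega) h
    omega
  · by_contra! hlt
    have := hl.countP_le_of_getElem_lt (by omega) hlt
    omega

end List

section kthLargest

variable {ι : Type*} [Fintype ι]

theorem le_kthLargest_iff (f : ι → ℝ) {k : ℕ} (hk : 1 ≤ k) (hkι : k ≤ Fintype.card ι)
    (c : ℝ) :
    c ≤ kthLargest f k ↔ k ≤ #{i | c ≤ f i} := by
  set l := (univ.val.map f).sort (· ≤ ·)
  change c ≤ l.getD (Fintype.card ι - k) 0 ↔ _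
  have hlen : l.length = Fintype.card ι := by simp [l]
  have hcount : l.countP (c ≤ ·) = #{i | c ≤ f i} := by
    rw [← Multiset.coe_countP, Multiset.sort_eq, Multiset.countP_map]
    rfl
  have hsorted : l.SortedLE := (Multiset.pairwise_sort _ _).sortedLE
  rw [← hcount, ← hlen, List.getD_eq_getElem _ _ (by omega)]
  exact hsorted.le_getElem_length_sub_iff hk (by omega)

theorem le_kthLargest_of_le_card {f : ι → ℝ} {k : ℕ} (hk : 1 ≤ k) {c : ℝ}
    (h : k ≤ #{i | c ≤ f i}) : c ≤ kthLargest f k :=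
  (le_kthLargest_iff f hk (h.trans (card_le_univ _)) c).mpr h

theorem lt_kthLargest_of_le_card {f : ι → ℝ} {k : ℕ} (hk : 1 ≤ k) {c : ℝ}
    (h : k ≤ #{i | c < f i}) : c < kthLargest f k := by
  obtain ⟨i₀, hi₀, hmin⟩ := exists_min_image _ f (card_pos.mp (hk.trans h))
  have hsub : ({i | c < f i} : Finset ι) ⊆ ({i | f i₀ ≤ f i} : Finset ι) := fun i hi => by
    simpa using hmin i hi
  exact (mem_filter.mp hi₀).2.trans_le
    (le_kthLargest_of_le_card hk (h.trans (card_le_card hsub)))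

theorem measurable_card_filter {δ : Type*} [MeasurableSpace δ] {p : ι → δ → Prop}
    [∀ i x, Decidable (p i x)] (hp : ∀ i, MeasurableSet {x | p i x}) :
    Measurable fun x => #{i | p i x} := by
  simp_rw [card_filter]
  exact Finset.measurable_sum _ fun i _ => Measurable.ite (hp i) measurable_const measurable_const

theorem measurable_kthLargest {k : ℕ} (hk : 1 ≤ k) (hkι : k ≤ Fintype.card ι) :
    Measurable fun f : ι → ℝ => kthLargest f k := by
  refine measurable_of_Ici fun c => ?_
  have hpre : (fun f : ι → ℝ => kthLargest f k) ⁻¹' Set.Ici c =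
      (fun f : ι → ℝ => #{i | c ≤ f i}) ⁻¹' Set.Ici k := by
    ext f
    exact le_kthLargest_iff f hk hkι c
  rw [hpre]
  exact measurable_card_filter (fun i => measurableSet_le measurable_const (measurable_pi_apply i))
    measurableSet_Ici

end kthLargest

section upperRank

variable {ι : Type*} [Fintype ι]

noncomputable def upperRank (g : ι → ℝ) (i : ι) : ℕ := #{j | g i ≤ g j}

theorem card_filter_upperRank_le (g : ι → ℝ) (m : ℕ) : #{i | upperRank g i ≤ m} ≤ m := by
  obtain hempty | ⟨i₀, hi₀, hmin⟩ :=
    ({i | upperRank g i ≤ m} : Finset ι).eq_empty_or_nonempty.imp_right (exists_min_image _ g)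
  · simp [hempty]
  · have hsub : ({i | upperRank g i ≤ m} : Finset ι) ⊆ ({j | g i₀ ≤ g j} : Finset ι) :=
      fun i hi => by simpa using hmin i hi
    exact (card_le_card hsub).trans (mem_filter.mp hi₀).2

theorem upperRank_comp_perm (g : ι → ℝ) (τ : Equiv.Perm ι) (i : ι) :
    upperRank (g ∘ τ) i = upperRank g (τ i) :=
  card_equiv τ (by simp)

theorem upperRank_last_le_of_kthLargest_lt {n m : ℕ} {g : Fin (n + 1) → ℝ} (hm : 1 ≤ m)
    (h : kthLargest (fun i : Fin n => g i.castSucc) m < g (Fin.last n)) :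
    upperRank g (Fin.last n) ≤ m := by
  have hcal : #{i : Fin n | g (Fin.last n) ≤ g i.castSucc} < m := by
    by_contra! hle
    exact (le_kthLargest_of_le_card hm hle).not_gt h
  have hsplit : upperRank g (Fin.last n) = #{i : Fin n | g (Fin.last n) ≤ g i.castSucc} + 1 := by
    rw [upperRank, card_filter, card_filter, Fin.sum_univ_castSucc, if_pos le_rfl]
  omega

end upperRank

section Exchangeable

variable {Ω ι : Type*} [MeasurableSpace Ω] [Fintype ι]

theorem sum_measure_le_of_forall_card_le (μ : Measure Ω) {A : ι → Set Ω}
    [∀ i, DecidablePred (· ∈ A i)] (hA : ∀ i, MeasurableSet (A i)) {m : ℕ}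
    (h : ∀ ω, #{i | ω ∈ A i} ≤ m) :
    ∑ i, μ (A i) ≤ m * μ Set.univ := by
  calc ∑ i, μ (A i) = ∫⁻ ω, ∑ i, (A i).indicator 1 ω ∂μ := by
        rw [lintegral_finsetSum _ fun i _ => measurable_one.indicator (hA i)]
        simp_rw [lintegral_indicator_one (hA _)]
    _ ≤ ∫⁻ _, (m : ℝ≥0∞) ∂μ := lintegral_mono fun ω => by
        simpa [Set.indicator_apply] using (Nat.cast_le (α := ℝ≥0∞)).mpr (h ω)
    _ = m * μ Set.univ := lintegral_const _

variable {E : Type*} [MeasurableSpace E] {μ : Measure Ω} {W : Ω → ι → E}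

theorem measure_upperRank_le_eq_of_exchangeable (hW : Measurable W)
    (hexch : ∀ τ : Equiv.Perm ι, μ.map (fun ω i => W ω (τ i)) = μ.map W)
    {s : E → ℝ} (hs : Measurable s) (m : ℕ) (i j : ι) :
    μ {ω | upperRank (fun k => s (W ω k)) i ≤ m} =
      μ {ω | upperRank (fun k => s (W ω k)) j ≤ m} := by
  classical
  set B : Set (ι → E) := {v | upperRank (fun k => s (v k)) j ≤ m}
  have hB : MeasurableSet B :=
    measurable_card_filter (fun k => measurableSet_le (hs.comp (measurable_pi_apply j))
      (hs.comp (measurable_pi_apply k))) measurableSet_Iic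
  have hτ : Measurable fun ω k => W ω (Equiv.swap i j k) :=
    measurable_pi_lambda _ fun k => (measurable_pi_apply _).comp hW
  have hpre : {ω | upperRank (fun k => s (W ω k)) i ≤ m} =
      (fun ω k => W ω (Equiv.swap i j k)) ⁻¹' B := by
    ext ω
    have := upperRank_comp_perm (fun k => s (W ω k)) (Equiv.swap i j) j
    simp only [Function.comp_def, Equiv.swap_apply_right] at this
    simp [B, this]
  rw [hpre, ← Measure.map_apply hτ hB, hexch, Measure.map_apply hW hB]
  rfl

theorem card_mul_measure_upperRank_le_of_exchangeable [IsProbabilityMeasure μ]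
    (hW : Measurable W)
    (hexch : ∀ τ : Equiv.Perm ι, μ.map (fun ω i => W ω (τ i)) = μ.map W)
    {s : E → ℝ} (hs : Measurable s) (m : ℕ) (j : ι) :
    Fintype.card ι * μ {ω | upperRank (fun k => s (W ω k)) j ≤ m} ≤ m := by
  have hA : ∀ i, MeasurableSet {ω | upperRank (fun k => s (W ω k)) i ≤ m} := fun i =>
    measurable_card_filter (fun k => measurableSet_le (hs.comp ((measurable_pi_apply i).comp hW))
      (hs.comp ((measurable_pi_apply k).comp hW))) measurableSet_Iic
  calc (Fintype.card ι : ℝ≥0∞) * μ {ω | upperRank (fun k => s (W ω k)) j ≤ m}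
      = ∑ i, μ {ω | upperRank (fun k => s (W ω k)) i ≤ m} := by
        simp [measure_upperRank_le_eq_of_exchangeable hW hexch hs m _ j]
    _ ≤ m * μ Set.univ := sum_measure_le_of_forall_card_le μ hA
        fun ω => card_filter_upperRank_le (fun k => s (W ω k)) m
    _ = m := by simp

end Exchangeable

theorem janet_kfwer_control_general
    {Ω : Type*} [MeasurableSpace Ω] (μ : Measure Ω) [IsProbabilityMeasure μ]
    (T H n : ℕ)
    (K : ℕ) (hK : 1 ≤ K) (hKH : K ≤ H)
    (ε : ℝ) (hfloor : 1 ≤ ⌊ε * ((n : ℝ) + 1)⌋₊)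
    -- the histories and target trajectories of the n + 1 series
    (X : Fin (n + 1) → Ω → Fin T → ℝ) (Y : Fin (n + 1) → Ω → Fin H → ℝ)
    (hX : ∀ i, Measurable (X i)) (hY : ∀ i, Measurable (Y i))
    -- exchangeability of the joint distribution of the n + 1 pairs
    (hexch : ∀ τ : Equiv.Perm (Fin (n + 1)),
      μ.map (fun ω => fun i : Fin (n + 1) => (X (τ i) ω, Y (τ i) ω)) =
        μ.map (fun ω => fun i : Fin (n + 1) => (X i ω, Y i ω)))
    -- the point predictor and the positive scaling functions
    (f : (Fin T → ℝ) → Fin H → ℝ) (hf : Measurable f)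
    (σ : Fin H → (Fin T → ℝ) → ℝ)
    (hσmeas : ∀ j, Measurable (σ j)) (hσpos : ∀ j x, 0 < σ j x)
    -- the K-max non-conformity scores
    (α : Fin (n + 1) → Ω → ℝ)
    (hα : ∀ i ω, α i ω =
      kthLargest (fun j : Fin H => |Y i ω j - f (X i ω) j| / σ j (X i ω)) K)
    -- the calibrated quantile: the ⌊ε(n+1)⌋-th largest score among α_1, …, α_n
    (q : Ω → ℝ)
    (hq : ∀ ω, q ω =
      kthLargest (fun i : Fin n => α i.castSucc ω) ⌊ε * ((n : ℝ) + 1)⌋₊) :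
    μ {ω | K ≤ (Finset.univ.filter fun j : Fin H =>
        q ω * σ j (X (Fin.last n) ω) <
          |Y (Fin.last n) ω j - f (X (Fin.last n) ω) j|).card} ≤
      ENNReal.ofReal ε := by
  set m := ⌊ε * ((n : ℝ) + 1)⌋₊
  set score : (Fin T → ℝ) × (Fin H → ℝ) → ℝ :=
    fun p => kthLargest (fun j => |p.2 j - f p.1 j| / σ j p.1) K
  have hscore : Measurable score :=
    (measurable_kthLargest hK (by simpa using hKH)).comp
      (measurable_pi_lambda _ fun j => by have := hσmeas j; fun_prop)
  have hrank := card_mul_measure_upperRank_le_of_exchangeable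
    (W := fun ω i => (X i ω, Y i ω)) (measurable_pi_lambda _ fun i => (hX i).prodMk (hY i))
    hexch hscore m (Fin.last n)
  have hmiss : {ω | K ≤ (Finset.univ.filter fun j : Fin H =>
        q ω * σ j (X (Fin.last n) ω) < |Y (Fin.last n) ω j - f (X (Fin.last n) ω) j|).card} ⊆
      {ω | upperRank (fun i => score (X i ω, Y i ω)) (Fin.last n) ≤ m} := by
    intro ω hω
    have hq_lt : q ω < α (Fin.last n) ω := by
      rw [hα]
      refine lt_kthLargest_of_le_card hK (hω.trans_eq (card_equiv (Equiv.refl _) fun j => ?_))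
      simp [lt_div_iff₀ (hσpos j _)]
    refine upperRank_last_le_of_kthLargest_lt hfloor ?_
    simpa [score, ← hα, ← hq] using hq_lt
  have hm : (m : ℝ) ≤ ε * ((n : ℝ) + 1) :=
    Nat.floor_le (zero_le_one.trans (Nat.one_le_floor_iff _ |>.mp hfloor))
  calc μ _ ≤ μ {ω | upperRank (fun i => score (X i ω, Y i ω)) (Fin.last n) ≤ m} :=
        measure_mono hmiss
    _ ≤ m / (n + 1 : ℝ≥0∞) := by
        rw [ENNReal.le_div_iff_mul_le (by simp) (by simp), mul_comm]
        simpa using hrank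
    _ ≤ ENNReal.ofReal ε := by
        refine ENNReal.div_le_of_le_mul ?_
        rw [← ENNReal.ofReal_natCast, ← ENNReal.ofReal_natCast n, ← ENNReal.ofReal_one,
          ← ENNReal.ofReal_add (by positivity) zero_le_one,
          ← ENNReal.ofReal_mul' (by positivity)]
        exact ENNReal.ofReal_le_ofReal hm

/-- JANET's exact finite-sample `K`-FWER control in the exchangeable (multiple
independent time series) setting: calibrating the `K`-max scaled-residual
non-conformity score on `n` exchangeable calibration series at the
`⌊ε(n+1)⌋`-th largest score yields a joint prediction region for the test series
(indexed by `Fin.last n`) in which at least `K` of the `H` future components are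
missed with probability at most `ε`. -/
theorem janet_kfwer_control
    {Ω : Type*} [MeasurableSpace Ω] (μ : Measure Ω) [IsProbabilityMeasure μ]
    (T H n : ℕ) (hT : 1 ≤ T) (hH : 1 ≤ H) (hn : 1 ≤ n)
    (K : ℕ) (hK : 1 ≤ K) (hKH : K ≤ H)
    (ε : ℝ) (hε : ε ∈ Set.Ioo (0 : ℝ) 1) (hfloor : 1 ≤ ⌊ε * ((n : ℝ) + 1)⌋₊)
    -- the histories and target trajectories of the n + 1 series
    (X : Fin (n + 1) → Ω → Fin T → ℝ) (Y : Fin (n + 1) → Ω → Fin H → ℝ)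
    (hX : ∀ i, Measurable (X i)) (hY : ∀ i, Measurable (Y i))
    -- exchangeability of the joint distribution of the n + 1 pairs
    (hexch : ∀ τ : Equiv.Perm (Fin (n + 1)),
      μ.map (fun ω => fun i : Fin (n + 1) => (X (τ i) ω, Y (τ i) ω)) =
        μ.map (fun ω => fun i : Fin (n + 1) => (X i ω, Y i ω)))
    -- the point predictor and the positive scaling functions
    (f : (Fin T → ℝ) → Fin H → ℝ) (hf : Measurable f)
    (σ : Fin H → (Fin T → ℝ) → ℝ)
    (hσmeas : ∀ j, Measurable (σ j)) (hσpos : ∀ j x, 0 < σ j x)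
    -- the K-max non-conformity scores
    (α : Fin (n + 1) → Ω → ℝ)
    (hα : ∀ i ω, α i ω =
      kthLargest (fun j : Fin H => |Y i ω j - f (X i ω) j| / σ j (X i ω)) K)
    -- the calibrated quantile: the ⌊ε(n+1)⌋-th largest score among α_1, …, α_n
    (q : Ω → ℝ)
    (hq : ∀ ω, q ω =
      kthLargest (fun i : Fin n => α i.castSucc ω) ⌊ε * ((n : ℝ) + 1)⌋₊) :
    μ {ω | K ≤ (Finset.univ.filter fun j : Fin H =>
        q ω * σ j (X (Fin.last n) ω) <
          |Y (Fin.last n) ω j - f (X (Fin.last n) ω) j|).card} ≤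
      ENNReal.ofReal ε :=
  janet_kfwer_control_general μ T H n K hK hKH ε hfloor X Y hX hY hexch f hf σ hσmeas hσpos α hα q
    hq
end
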